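/- Let ψ, ζ, ξ, χ : ℝ^{1+3} → ℝ be smooth and let Z be any one of the Lorentz vector fields ∂_μ (0 ≤ μ ≤ 3), Ω_{0k} = t∂_k + x_k∂_t, Ω_{ij} = x_i∂_j − x_j∂_i, or S = t∂_t + Σ_i x_i∂_i. Writing Q^{αβ}(ψ,ζ)Q_{αβ}(ξ,χ) := Σ_{α,β=0}^3 Q^{αβ}(ψ,ζ)·Q_{αβ}(ξ,χ), one has Z[Q^{αβ}(ψ,ζ)Q_{αβ}(ξ,χ)] = Q^{αβ}(Zψ,ζ)Q_{αβ}(ξ,χ) + Q^{αβ}(ψ,Zζ)Q_{αβ}(ξ,χ) + Q^{αβ}(ψ,ζ)Q_{αβ}(Zξ,χ) + Q^{αβ}(ψ,ζ)Q_{αβ}(ξ,Zχ) + c·Q^{αβ}(ψ,ζ)Q_{αβ}(ξ,χ), where c = −4 if Z = S and c = 0 for all the other fields. -/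

import Mathlib

/-! Every Lorentz field is `Z = V·∇` with `V` affine, and `∂_α (Z f) = Z (∂_α f) + df(∂_α V)`.
Since `∂V` is an infinitesimal conformal transformation of `η` with factor `c` (`c = 0` for
translations, boosts and rotations, `c = 2` for `S`), this gives
`Z Q(ξ,χ) = Q(Zξ,χ) + Q(ξ,Zχ) - c Q(ξ,χ)` for the null form `Q(ξ,χ) = η^{αβ} ∂_αξ ∂_βχ`.
The contraction is `Q^{αβ}(ψ,ζ) Q_{αβ}(ξ,χ) = 2 (Q(ψ,ξ) Q(ζ,χ) - Q(ψ,χ) Q(ζ,ξ))`, so by the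
Leibniz rule its defect is `-2c`. -/

noncomputable section

open Real MeasureTheory

/-- Spacetime point in `ℝ^{1+3}`: coordinate `0` is the time `t`,
coordinates `i.succ` (for `i : Fin 3`) are the spatial coordinates `x_i`. -/
abbrev Pt := Fin 4 → ℝ

/-- A point of the initial slice `{t = 1} ≅ ℝ³`. -/
abbrev Sp := Fin 3 → ℝ

/-- The spacetime point with time `t` and space part `x`. -/
def mkPt (t : ℝ) (x : Sp) : Pt := Fin.cons t x

/-- Coordinate partial derivative `∂_μ`. -/
def pd (μ : Fin 4) (f : Pt → ℝ) : Pt → ℝ := fun p => fderiv ℝ f p (Pi.single μ 1)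

/-- Radial coordinate `r = |x|`. -/
def rr (p : Pt) : ℝ := Real.sqrt (∑ i : Fin 3, (p i.succ) ^ 2)

/-- `ω_i = x_i / r`. -/
def om (i : Fin 3) (p : Pt) : ℝ := p i.succ / rr p

/-- Radial derivative `∂_r = Σ_i ω_i ∂_i`. -/
def pdr (f : Pt → ℝ) : Pt → ℝ := fun p => ∑ i : Fin 3, om i p * pd i.succ f p

/-- Outgoing null derivative `L = ∂_t + ∂_r`. -/
def Lop (f : Pt → ℝ) : Pt → ℝ := fun p => pd 0 f p + pdr f p

/-- Incoming null derivative `L̲ = ∂_t - ∂_r`. -/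
def Lbop (f : Pt → ℝ) : Pt → ℝ := fun p => pd 0 f p - pdr f p

/-- Angular ("good") derivative `∂̄_i = ∂_i - ω_i ∂_r`. -/
def pbar (i : Fin 3) (f : Pt → ℝ) : Pt → ℝ := fun p => pd i.succ f p - om i p * pdr f p

/-- Null coordinate `u = (t - r)/2`. -/
def uuf (p : Pt) : ℝ := (p 0 - rr p) / 2

/-- Null coordinate `ū = (t + r)/2`. -/
def ubf (p : Pt) : ℝ := (p 0 + rr p) / 2

/-- `r = |x|` on the initial slice. -/
def rr3 (x : Sp) : ℝ := Real.sqrt (∑ i : Fin 3, (x i) ^ 2)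

/-- Minkowski signature sign `η^{μμ}` (`-1` for time, `+1` for space). -/
def eta : Fin 4 → ℝ := fun μ => if μ = 0 then -1 else 1

/-- Null form `Q(ξ,χ) = -∂_tξ ∂_tχ + Σ_i ∂_iξ ∂_iχ`. -/
def nullQ (ξ χ : Pt → ℝ) : Pt → ℝ :=
  fun p => -(pd 0 ξ p * pd 0 χ p) + ∑ i : Fin 3, pd i.succ ξ p * pd i.succ χ p

/-- Null form `Q_{αβ}(ξ,χ) = ∂_αξ ∂_βχ - ∂_βξ ∂_αχ`. -/
def Qdn (α β : Fin 4) (ξ χ : Pt → ℝ) : Pt → ℝ :=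
  fun p => pd α ξ p * pd β χ p - pd β ξ p * pd α χ p

/-- Raised-index null form `Q^{αβ}(ξ,χ) = ∂^αξ ∂^βχ - ∂^βξ ∂^αχ`. -/
def Qup (α β : Fin 4) (ξ χ : Pt → ℝ) : Pt → ℝ :=
  fun p => eta α * eta β * Qdn α β ξ χ p

/-- Double null form `Q^{αβ}(ψ, Q_{αβ}(ξ,χ))`, summed over `α, β`. -/
def dnull (ψ ξ χ : Pt → ℝ) : Pt → ℝ :=
  fun p => ∑ α : Fin 4, ∑ β : Fin 4,
    (eta α * pd α ψ p * (eta β * pd β (Qdn α β ξ χ) p)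
      - eta β * pd β ψ p * (eta α * pd α (Qdn α β ξ χ) p))

/-- Quadratic contraction `Q^{αβ}(ψ,ζ) · Q_{αβ}(ξ,χ)`, summed over `α, β`. -/
def QQgen (ψ ζ ξ χ : Pt → ℝ) : Pt → ℝ :=
  fun p => ∑ α : Fin 4, ∑ β : Fin 4, Qup α β ψ ζ p * Qdn α β ξ χ p

/-- Contraction `Q^{αβ}(θ,φ) Q_{αβ}(θ,φ)`. -/
def QQc (θ φ : Pt → ℝ) : Pt → ℝ := QQgen θ φ θ φ
/-- Lorentz boost `Ω_{0i} = t ∂_i + x_i ∂_t`. -/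
def boostOp (i : Fin 3) (f : Pt → ℝ) : Pt → ℝ :=
  fun p => p 0 * pd i.succ f p + p i.succ * pd 0 f p

/-- Rotation `Ω_{ij} = x_i ∂_j - x_j ∂_i`. -/
def rotOp (i j : Fin 3) (f : Pt → ℝ) : Pt → ℝ :=
  fun p => p i.succ * pd j.succ f p - p j.succ * pd i.succ f p

/-- Scaling field `S = t ∂_t + Σ_i x_i ∂_i`. -/
def scalOp (f : Pt → ℝ) : Pt → ℝ :=
  fun p => p 0 * pd 0 f p + ∑ i : Fin 3, p i.succ * pd i.succ f p

def lieDeriv (V : Pt → Pt) (f : Pt → ℝ) : Pt → ℝ := fun p => fderiv ℝ f p (V p)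

lemma pd_eq_lieDeriv (μ : Fin 4) : pd μ = lieDeriv (fun _ => Pi.single μ 1) := rfl

def boostMap (k : Fin 3) : Pt →L[ℝ] Pt :=
  (ContinuousLinearMap.proj 0).smulRight (Pi.single k.succ 1)
    + (ContinuousLinearMap.proj k.succ).smulRight (Pi.single 0 1)

def rotMap (i j : Fin 3) : Pt →L[ℝ] Pt :=
  (ContinuousLinearMap.proj i.succ).smulRight (Pi.single j.succ 1)
    - (ContinuousLinearMap.proj j.succ).smulRight (Pi.single i.succ 1)

lemma boostOp_eq_lieDeriv (k : Fin 3) : boostOp k = lieDeriv (boostMap k) := by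
  funext f p
  simp [boostOp, lieDeriv, boostMap, pd]

lemma rotOp_eq_lieDeriv (i j : Fin 3) : rotOp i j = lieDeriv (rotMap i j) := by
  funext f p
  simp [rotOp, lieDeriv, rotMap, pd]

lemma scalOp_eq_lieDeriv : scalOp = lieDeriv (ContinuousLinearMap.id ℝ Pt) := by
  funext f p
  calc scalOp f p = ∑ ν, p ν * fderiv ℝ f p (Pi.single ν 1) := by
        simp [scalOp, pd, Fin.sum_univ_succ (n := 3)]
    _ = fderiv ℝ f p (∑ ν, p ν • Pi.single ν 1) := by simp
    _ = lieDeriv (ContinuousLinearMap.id ℝ Pt) f p := by rw [← pi_eq_sum_univ' p]; rfl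

section LieDeriv

variable {V : Pt → Pt} {f g : Pt → ℝ} {p : Pt}

lemma lieDeriv_mul (hf : DifferentiableAt ℝ f p) (hg : DifferentiableAt ℝ g p) :
    lieDeriv V (fun q => f q * g q) p = lieDeriv V f p * g p + f p * lieDeriv V g p := by
  simp only [lieDeriv, fderiv_fun_mul hf hg, add_apply, smul_apply, smul_eq_mul]
  ring

lemma lieDeriv_sub (hf : DifferentiableAt ℝ f p) (hg : DifferentiableAt ℝ g p) :
    lieDeriv V (fun q => f q - g q) p = lieDeriv V f p - lieDeriv V g p := by
  simp only [lieDeriv, fderiv_fun_sub hf hg, sub_apply]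

lemma lieDeriv_const_mul (hf : DifferentiableAt ℝ f p) (c : ℝ) :
    lieDeriv V (fun q => c * f q) p = c * lieDeriv V f p := by
  simp only [lieDeriv, fderiv_const_mul hf, smul_apply, smul_eq_mul]

lemma lieDeriv_sum {ι : Type*} {s : Finset ι} {F : ι → Pt → ℝ}
    (hF : ∀ i ∈ s, DifferentiableAt ℝ (F i) p) :
    lieDeriv V (fun q => ∑ i ∈ s, F i q) p = ∑ i ∈ s, lieDeriv V (F i) p := by
  simp only [lieDeriv, fderiv_fun_sum hF, sum_apply]

lemma contDiff_pd {n : WithTop ℕ∞} (hf : ContDiff ℝ (n + 1) f) (μ : Fin 4) :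
    ContDiff ℝ n (pd μ f) :=
  (hf.fderiv_right le_rfl).clm_apply contDiff_const

lemma differentiableAt_pd (hf : ContDiff ℝ 2 f) (μ : Fin 4) : DifferentiableAt ℝ (pd μ f) p :=
  ((contDiff_pd (n := 1) hf μ).differentiable one_ne_zero).differentiableAt

lemma pd_lieDeriv (hf : ContDiff ℝ 2 f) (hV : DifferentiableAt ℝ V p) (α : Fin 4) :
    pd α (lieDeriv V f) p
      = lieDeriv V (pd α f) p + fderiv ℝ f p (fderiv ℝ V p (Pi.single α 1)) := by
  have hdf : DifferentiableAt ℝ (fderiv ℝ f) p :=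
    ((hf.fderiv_right (m := 1) le_rfl).differentiable one_ne_zero).differentiableAt
  have hsymm : IsSymmSndFDerivAt ℝ f p :=
    hf.contDiffAt.isSymmSndFDerivAt (by simp [minSmoothness_of_isRCLikeNormedField])
  have hL : lieDeriv V f = fun q => fderiv ℝ f q (V q) := rfl
  have hpd : pd α f = fun q => fderiv ℝ f q (Pi.single α 1) := rfl
  simp only [pd, lieDeriv, hL, hpd, fderiv_clm_apply hdf hV,
    fderiv_clm_apply hdf (differentiableAt_const _)]
  simp [hsymm (V p), add_comm]

end LieDeriv

def minkowskiDual (a b : Pt →L[ℝ] ℝ) : ℝ :=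
  ∑ α, eta α * a (Pi.single α 1) * b (Pi.single α 1)

/-- For `L = ∂V` this is the conformal Killing equation `∂^α V^β + ∂^β V^α = c η^{αβ}`,
tested on covectors. -/
def IsConformalKilling (L : Pt →L[ℝ] Pt) (c : ℝ) : Prop :=
  ∀ a b : Pt →L[ℝ] ℝ, minkowskiDual (a.comp L) b + minkowskiDual a (b.comp L) = c * minkowskiDual a b

lemma isConformalKilling_zero : IsConformalKilling 0 0 := by
  intro a b
  simp [minkowskiDual]

lemma isConformalKilling_id : IsConformalKilling (ContinuousLinearMap.id ℝ Pt) 2 := by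
  intro a b
  simp only [ContinuousLinearMap.comp_id]
  ring

lemma isConformalKilling_boostMap (k : Fin 3) : IsConformalKilling (boostMap k) 0 := by
  intro a b
  fin_cases k <;> simp [minkowskiDual, boostMap, Fin.sum_univ_four, eta]

lemma isConformalKilling_rotMap (i j : Fin 3) : IsConformalKilling (rotMap i j) 0 := by
  intro a b
  fin_cases i <;> fin_cases j <;> simp [minkowskiDual, rotMap, Fin.sum_univ_four, eta]

lemma nullQ_eq_sum (ξ χ : Pt → ℝ) :
    nullQ ξ χ = fun p => ∑ α, eta α * (pd α ξ p * pd α χ p) := by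
  funext p
  simp [nullQ, Fin.sum_univ_succ (n := 3), eta]

lemma nullQ_eq_minkowskiDual (ξ χ : Pt → ℝ) (p : Pt) :
    nullQ ξ χ p = minkowskiDual (fderiv ℝ ξ p) (fderiv ℝ χ p) := by
  simp [nullQ_eq_sum, minkowskiDual, pd, mul_assoc]

lemma differentiableAt_nullQ {ξ χ : Pt → ℝ} (hξ : ContDiff ℝ 2 ξ) (hχ : ContDiff ℝ 2 χ) (p : Pt) :
    DifferentiableAt ℝ (nullQ ξ χ) p := by
  rw [nullQ_eq_sum]
  have := differentiableAt_pd (p := p) hξ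
  have := differentiableAt_pd (p := p) hχ
  fun_prop

lemma lieDeriv_nullQ {V : Pt → Pt} {p : Pt} {c : ℝ} (hV : DifferentiableAt ℝ V p)
    (hc : IsConformalKilling (fderiv ℝ V p) c) {ξ χ : Pt → ℝ}
    (hξ : ContDiff ℝ 2 ξ) (hχ : ContDiff ℝ 2 χ) :
    lieDeriv V (nullQ ξ χ) p
      = nullQ (lieDeriv V ξ) χ p + nullQ ξ (lieDeriv V χ) p - c * nullQ ξ χ p := by
  have hdev := hc (fderiv ℝ ξ p) (fderiv ℝ χ p)
  rw [← nullQ_eq_minkowskiDual] at hdev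
  simp only [minkowskiDual, ContinuousLinearMap.comp_apply] at hdev
  have hprod (α : Fin 4) : DifferentiableAt ℝ (fun q => pd α ξ q * pd α χ q) p :=
    (differentiableAt_pd hξ α).mul (differentiableAt_pd hχ α)
  rw [← hdev, nullQ_eq_sum, lieDeriv_sum fun α _ => (hprod α).const_mul _]
  simp only [nullQ_eq_sum, lieDeriv_const_mul (hprod _),
    lieDeriv_mul (differentiableAt_pd hξ _) (differentiableAt_pd hχ _),
    pd_lieDeriv hξ hV, pd_lieDeriv hχ hV, ← Finset.sum_add_distrib, ← Finset.sum_sub_distrib]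
  refine Finset.sum_congr rfl fun α _ => ?_
  simp only [pd]
  ring

lemma QQgen_eq_nullQ (ψ ζ ξ χ : Pt → ℝ) :
    QQgen ψ ζ ξ χ
      = fun p => 2 * (nullQ ψ ξ p * nullQ ζ χ p - nullQ ψ χ p * nullQ ζ ξ p) := by
  funext p
  simp only [QQgen, Qup, Qdn, nullQ_eq_sum, Fin.sum_univ_four]
  ring

lemma lieDeriv_QQgen {V : Pt → Pt} {p : Pt} {c : ℝ} (hV : DifferentiableAt ℝ V p)
    (hc : IsConformalKilling (fderiv ℝ V p) c) {ψ ζ ξ χ : Pt → ℝ}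
    (hψ : ContDiff ℝ 2 ψ) (hζ : ContDiff ℝ 2 ζ) (hξ : ContDiff ℝ 2 ξ) (hχ : ContDiff ℝ 2 χ) :
    lieDeriv V (QQgen ψ ζ ξ χ) p
      = QQgen (lieDeriv V ψ) ζ ξ χ p + QQgen ψ (lieDeriv V ζ) ξ χ p
        + QQgen ψ ζ (lieDeriv V ξ) χ p + QQgen ψ ζ ξ (lieDeriv V χ) p
        - 2 * c * QQgen ψ ζ ξ χ p := by
  have hQ {f g : Pt → ℝ} (hf : ContDiff ℝ 2 f) (hg : ContDiff ℝ 2 g) :=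
    differentiableAt_nullQ hf hg p
  simp only [QQgen_eq_nullQ]
  rw [lieDeriv_const_mul (((hQ hψ hξ).fun_mul (hQ hζ hχ)).fun_sub ((hQ hψ hχ).fun_mul (hQ hζ hξ))),
    lieDeriv_sub ((hQ hψ hξ).fun_mul (hQ hζ hχ)) ((hQ hψ hχ).fun_mul (hQ hζ hξ)),
    lieDeriv_mul (hQ hψ hξ) (hQ hζ hχ), lieDeriv_mul (hQ hψ hχ) (hQ hζ hξ),
    lieDeriv_nullQ hV hc hψ hξ, lieDeriv_nullQ hV hc hζ hχ,
    lieDeriv_nullQ hV hc hψ hχ, lieDeriv_nullQ hV hc hζ hξ]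
  ring

/-- commutation of the Lorentz vector fields with the product
contraction `Q^{αβ}(ψ,ζ)·Q_{αβ}(ξ,χ)`: the Leibniz rule holds exactly for
`∂_μ`, the boosts and the rotations, and up to `-4` times the contraction for
the scaling field `S`. -/
theorem null_form_contraction_commutes_with_lorentz_fields
    (ψ ζ ξ χ : Pt → ℝ) (hψ : ContDiff ℝ (⊤:ℕ∞) ψ) (hζ : ContDiff ℝ (⊤:ℕ∞) ζ)
    (hξ : ContDiff ℝ (⊤:ℕ∞) ξ) (hχ : ContDiff ℝ (⊤:ℕ∞) χ) :
    (∀ μ : Fin 4, ∀ p : Pt,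
      pd μ (QQgen ψ ζ ξ χ) p
        = QQgen (pd μ ψ) ζ ξ χ p + QQgen ψ (pd μ ζ) ξ χ p
          + QQgen ψ ζ (pd μ ξ) χ p + QQgen ψ ζ ξ (pd μ χ) p) ∧
    (∀ k : Fin 3, ∀ p : Pt,
      boostOp k (QQgen ψ ζ ξ χ) p
        = QQgen (boostOp k ψ) ζ ξ χ p + QQgen ψ (boostOp k ζ) ξ χ p
          + QQgen ψ ζ (boostOp k ξ) χ p + QQgen ψ ζ ξ (boostOp k χ) p) ∧
    (∀ i j : Fin 3, ∀ p : Pt,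
      rotOp i j (QQgen ψ ζ ξ χ) p
        = QQgen (rotOp i j ψ) ζ ξ χ p + QQgen ψ (rotOp i j ζ) ξ χ p
          + QQgen ψ ζ (rotOp i j ξ) χ p + QQgen ψ ζ ξ (rotOp i j χ) p) ∧
    (∀ p : Pt,
      scalOp (QQgen ψ ζ ξ χ) p
        = QQgen (scalOp ψ) ζ ξ χ p + QQgen ψ (scalOp ζ) ξ χ p
          + QQgen ψ ζ (scalOp ξ) χ p + QQgen ψ ζ ξ (scalOp χ) p
          + (-4) * QQgen ψ ζ ξ χ p) := by
  have h2 {f : Pt → ℝ} (hf : ContDiff ℝ (⊤:ℕ∞) f) : ContDiff ℝ 2 f :=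
    hf.of_le (WithTop.coe_le_coe.mpr le_top)
  have hQQ {V : Pt → Pt} {c : ℝ} (hV : Differentiable ℝ V)
      (hc : ∀ p, IsConformalKilling (fderiv ℝ V p) c) (p : Pt) :=
    lieDeriv_QQgen (hV p) (hc p) (h2 hψ) (h2 hζ) (h2 hξ) (h2 hχ)
  have hlin {L : Pt →L[ℝ] Pt} {c : ℝ} (hL : IsConformalKilling L c) :=
    hQQ L.differentiable fun _ => L.fderiv ▸ hL
  refine ⟨fun μ p => ?_, fun k p => ?_, fun i j p => ?_, fun p => ?_⟩
  · have hconst : ∀ p, IsConformalKilling (fderiv ℝ (fun _ : Pt => (Pi.single μ 1 : Pt)) p) 0 :=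
      fun _ => by rw [fderiv_const_apply]; exact isConformalKilling_zero
    rw [pd_eq_lieDeriv]
    linarith [hQQ (differentiable_const _) hconst p]
  · rw [boostOp_eq_lieDeriv]
    linarith [hlin (isConformalKilling_boostMap k) p]
  · rw [rotOp_eq_lieDeriv]
    linarith [hlin (isConformalKilling_rotMap i j) p]
  · rw [scalOp_eq_lieDeriv]
    linarith [hlin isConformalKilling_id p]
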